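/- Let M be a K×K graph metric matrix. Then the scaled Gershgorin lower bound on λ_min(M) is tight over all positive diagonal scalings: for every choice of strictly positive scalars s_1,…,s_K, min_i ( b_{i,i} − Σ_{j≠i} |b_{i,j}| ) ≤ λ_min(M), where B = S M S^{-1} and S = diag(s_1,…,s_K); and there exists a choice of strictly positive scalars (namely s_i = 1/v_i for a strictly positive first eigenvector v of M) achieving equality, so the supremum over all strictly positive scalings of the minimal Gershgorin disc left-end of S M S^{-1} equals λ_min(M). -/

import Mathlib

/-- A K×K real matrix is a *graph metric matrix* if it is symmetric positive
definite, has nonpositive off-diagonal entries, strictly positive diagonal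
entries, and is irreducible. -/
def IsGraphMetric {K : ℕ} (M : Matrix (Fin K) (Fin K) ℝ) : Prop :=
  M.PosDef ∧ (∀ i j, i ≠ j → M i j ≤ 0) ∧ (∀ i, 0 < M i i) ∧
    ∀ S : Set (Fin K), S.Nonempty → S ≠ Set.univ →
      ∃ i ∈ S, ∃ j ∉ S, M i j ≠ 0

/-- The set of (real) eigenvalues of a real matrix. -/
def eigenvalueSet {K : ℕ} (M : Matrix (Fin K) (Fin K) ℝ) : Set ℝ :=
  {μ : ℝ | ∃ v : Fin K → ℝ, v ≠ 0 ∧ M.mulVec v = μ • v}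

/-- The Gershgorin disc left-end of row `i` of `B = S M S⁻¹`, where
`S = diag s`. -/
noncomputable def gershLeftEnd {K : ℕ} (M : Matrix (Fin K) (Fin K) ℝ)
    (s : Fin K → ℝ) (i : Fin K) : ℝ :=
  (Matrix.diagonal s * M * Matrix.diagonal fun k => (s k)⁻¹) i i -
    ∑ j ∈ Finset.univ.erase i,
      |(Matrix.diagonal s * M * Matrix.diagonal fun k => (s k)⁻¹) i j|


/-!
Since `lam` is the least eigenvalue, `M - lam • 1` is positive semidefinite with nonpositive
off-diagonal entries, so the absolute value `|w|` of a first eigenvector `w` is again one, and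
irreducibility makes it strictly positive. With `v := |w|`, the scaling `s = v⁻¹` turns the
eigenvalue equation of row `i` into the statement that its disc left-end is exactly `lam`. For an
arbitrary scaling `s`, take a row `i` maximising `s i * v i`: there `s i / s j ≥ v j / v i` for
all `j`, so the disc of row `i` reaches at least as far left as under `v⁻¹`.
-/

open Matrix Finset

theorem sub_smul_one_mulVec_eq_zero_iff {n R : Type*} [Fintype n] [DecidableEq n] [CommRing R]
    (A : Matrix n n R) (μ : R) (x : n → R) : (A - μ • 1) *ᵥ x = 0 ↔ A *ᵥ x = μ • x := by
  rw [sub_mulVec, smul_mulVec, one_mulVec, sub_eq_zero]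

section NonposOffDiag

variable {n : Type*} [Fintype n] {A : Matrix n n ℝ}

theorem dotProduct_mulVec_abs_le (hoff : ∀ i j, i ≠ j → A i j ≤ 0) (x : n → ℝ) :
    |x| ⬝ᵥ A *ᵥ |x| ≤ x ⬝ᵥ A *ᵥ x := by
  simp only [dotProduct, mulVec, Finset.mul_sum, Pi.abs_apply]
  refine sum_le_sum fun i _ => sum_le_sum fun j _ => ?_
  rcases eq_or_ne i j with rfl | hij
  · exact le_of_eq (by rw [mul_left_comm, abs_mul_abs_self, mul_left_comm])
  · nlinarith [hoff i j hij, abs_mul_abs_self (x i), le_abs_self (x i * x j), abs_mul (x i) (x j)]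

/-- `|x|` cannot raise the quadratic form, which vanishes at `x` and is nonnegative. -/
theorem Matrix.PosSemidef.mulVec_abs_eq_zero (hA : A.PosSemidef) (hoff : ∀ i j, i ≠ j → A i j ≤ 0)
    {x : n → ℝ} (hx : A *ᵥ x = 0) : A *ᵥ |x| = 0 := by
  refine (hA.dotProduct_mulVec_zero_iff |x|).mp (le_antisymm ?_ ?_)
  · simpa [hx] using dotProduct_mulVec_abs_le hoff x
  · simpa using hA.dotProduct_mulVec_nonneg |x|

theorem eq_zero_of_mulVec_eq_smul (hoff : ∀ i j, i ≠ j → A i j ≤ 0) {v : n → ℝ} (hv : 0 ≤ v)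
    {μ : ℝ} (hAv : A *ᵥ v = μ • v) {i j : n} (hvi : v i = 0) (hAij : A i j ≠ 0) : v j = 0 := by
  have hrow : ∑ k, A i k * v k = 0 := by
    simpa [mulVec, dotProduct, hvi] using congrFun hAv i
  have hterm : ∀ k ∈ univ, A i k * v k ≤ 0 := by
    intro k _
    rcases eq_or_ne i k with rfl | hik
    · simp [hvi]
    · exact mul_nonpos_of_nonpos_of_nonneg (hoff i k hik) (hv k)
  have := (sum_eq_zero_iff_of_nonpos hterm).mp hrow j (mem_univ j)
  exact (mul_eq_zero.mp this).resolve_left hAij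

/-- The zero set of `v` is closed under the edges of the graph of `A`. -/
theorem pos_of_nonneg_of_mulVec_eq_smul (hoff : ∀ i j, i ≠ j → A i j ≤ 0)
    (hirr : ∀ S : Set n, S.Nonempty → S ≠ Set.univ → ∃ i ∈ S, ∃ j ∉ S, A i j ≠ 0)
    {v : n → ℝ} (hv0 : v ≠ 0) (hv : 0 ≤ v) {μ : ℝ} (hAv : A *ᵥ v = μ • v) (k : n) :
    0 < v k := by
  refine (hv k).lt_of_ne' fun hvk => ?_
  have hS : {i | v i = 0} ≠ Set.univ := fun h =>
    hv0 (funext fun i => (h ▸ Set.mem_univ i : i ∈ {i | v i = 0}))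
  obtain ⟨i, hvi, j, hvj, hAij⟩ := hirr {i | v i = 0} ⟨k, hvk⟩ hS
  exact hvj (eq_zero_of_mulVec_eq_smul hoff hv hAv hvi hAij)

theorem sum_erase_abs_mul_eq [DecidableEq n] (hoff : ∀ i j, i ≠ j → A i j ≤ 0) {v : n → ℝ}
    {μ : ℝ} (hAv : A *ᵥ v = μ • v) (i : n) :
    ∑ j ∈ univ.erase i, |A i j| * v j = (A i i - μ) * v i := by
  have hrow : ∑ j, A i j * v j = μ * v i := by
    simpa [mulVec, dotProduct] using congrFun hAv i
  rw [← add_sum_erase _ _ (mem_univ i)] at hrow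
  have habs : ∀ j ∈ univ.erase i, |A i j| * v j = -(A i j * v j) := fun j hj => by
    rw [abs_of_nonpos (hoff i j (ne_of_mem_erase hj).symm), neg_mul]
  rw [sum_congr rfl habs, sum_neg_distrib]
  linarith

end NonposOffDiag

theorem posSemidef_sub_smul_one_of_mem_lowerBounds {K : ℕ} {M : Matrix (Fin K) (Fin K) ℝ}
    (hM : M.IsHermitian) {lam : ℝ} (hlam : lam ∈ lowerBounds (eigenvalueSet M)) :
    (M - lam • 1).PosSemidef := by
  have hA : (M - lam • 1).IsHermitian := hM.sub (by simp [IsHermitian])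
  rw [hA.posSemidef_iff_eigenvalues_nonneg]
  intro i
  set b : Fin K → ℝ := ⇑(hA.eigenvectorBasis i)
  have hb0 : b ≠ 0 := fun h =>
    hA.eigenvectorBasis.orthonormal.ne_zero i (by ext k; exact congrFun h k)
  have hAb : (M - lam • 1 - hA.eigenvalues i • 1) *ᵥ b = 0 :=
    (sub_smul_one_mulVec_eq_zero_iff _ _ _).mpr (hA.mulVec_eigenvectorBasis i)
  rw [sub_sub, ← add_smul, sub_smul_one_mulVec_eq_zero_iff] at hAb
  have := hlam ⟨b, hb0, hAb⟩
  simp only [Pi.zero_apply]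
  linarith

section Gershgorin

variable {K : ℕ} {M : Matrix (Fin K) (Fin K) ℝ}

theorem gershLeftEnd_eq {s : Fin K → ℝ} (hs : ∀ k, 0 < s k) (i : Fin K) :
    gershLeftEnd M s i = M i i - ∑ j ∈ univ.erase i, s i / s j * |M i j| := by
  simp only [gershLeftEnd, mul_diagonal, diagonal_mul, abs_mul, abs_inv, abs_of_pos (hs _)]
  congr 1
  · field_simp [(hs i).ne']
  · exact sum_congr rfl fun j _ => by ring

theorem gershLeftEnd_le_of_forall_mul_le {s v : Fin K → ℝ} (hs : ∀ k, 0 < s k)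
    (hv : ∀ k, 0 < v k) {i : Fin K} (hi : ∀ j, s j * v j ≤ s i * v i) :
    gershLeftEnd M s i ≤ gershLeftEnd M (fun k => (v k)⁻¹) i := by
  rw [gershLeftEnd_eq hs, gershLeftEnd_eq fun k => inv_pos.mpr (hv k)]
  refine sub_le_sub_left (sum_le_sum fun j _ => mul_le_mul_of_nonneg_right ?_ (abs_nonneg _)) _
  rw [inv_div_inv, div_le_div_iff₀ (hv i) (hs j)]
  linarith [hi j]

theorem gershLeftEnd_inv_eq (hoff : ∀ i j, i ≠ j → M i j ≤ 0) {v : Fin K → ℝ}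
    (hv : ∀ k, 0 < v k) {μ : ℝ} (hMv : M *ᵥ v = μ • v) (i : Fin K) :
    gershLeftEnd M (fun k => (v k)⁻¹) i = μ := by
  have hrow := sum_erase_abs_mul_eq hoff hMv i
  rw [gershLeftEnd_eq fun k => inv_pos.mpr (hv k)]
  have hsum : ∑ j ∈ univ.erase i, (v i)⁻¹ / (v j)⁻¹ * |M i j|
      = (∑ j ∈ univ.erase i, |M i j| * v j) / v i := by
    rw [sum_div]
    exact sum_congr rfl fun j _ => by rw [inv_div_inv]; ring
  rw [hsum, hrow, mul_div_cancel_right₀ _ (hv i).ne']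
  ring

end Gershgorin

/-- Tightness of the scaled Gershgorin bound: for a graph metric matrix `M`
with smallest eigenvalue `lam`, every positive diagonal scaling yields a
minimal disc left-end at most `lam` (i.e. some row's left-end is `≤ lam`),
and the bound is achieved by the scaling `s i = 1 / v i` for a strictly
positive first eigenvector `v` of `M`, where all left-ends equal `lam`. -/
theorem scaled_gershgorin_bound_tight
    {K : ℕ} (M : Matrix (Fin K) (Fin K) ℝ) (hM : IsGraphMetric M)
    (lam : ℝ) (hlam : IsLeast (eigenvalueSet M) lam) :
    (∀ s : Fin K → ℝ, (∀ i, 0 < s i) → ∃ i, gershLeftEnd M s i ≤ lam) ∧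
    ∃ v : Fin K → ℝ, (∀ k, 0 < v k) ∧ M.mulVec v = lam • v ∧
      ∀ i, gershLeftEnd M (fun k => (v k)⁻¹) i = lam := by
  obtain ⟨hPD, hoff, -, hirr⟩ := hM
  obtain ⟨⟨w, hw0, hMw⟩, hlb⟩ := hlam
  have hshift_off : ∀ i j, i ≠ j → (M - lam • 1) i j ≤ 0 := fun i j hij => by
    simpa [one_apply_ne hij] using hoff i j hij
  have hMv : M *ᵥ |w| = lam • |w| := by
    rw [← sub_smul_one_mulVec_eq_zero_iff] at hMw ⊢
    have hshift := posSemidef_sub_smul_one_of_mem_lowerBounds hPD.isHermitian hlb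
    exact hshift.mulVec_abs_eq_zero hshift_off hMw
  have hv0 : |w| ≠ 0 := fun h => hw0 (funext fun k => abs_eq_zero.mp (congrFun h k))
  have hvpos := pos_of_nonneg_of_mulVec_eq_smul hoff hirr hv0 (abs_nonneg w) hMv
  refine ⟨fun s hs => ?_, |w|, hvpos, hMv, gershLeftEnd_inv_eq hoff hvpos hMv⟩
  have : Nonempty (Fin K) := not_isEmpty_iff.mp fun _ => hw0 (Subsingleton.elim _ _)
  obtain ⟨i, -, hi⟩ := exists_max_image univ (fun k => s k * |w| k) univ_nonempty
  exact ⟨i, (gershLeftEnd_le_of_forall_mul_le hs hvpos fun j => hi j (mem_univ j)).trans_eq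
    (gershLeftEnd_inv_eq hoff hvpos hMv i)⟩
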